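/- Let a ≥ n ≥ 0 be integers and let d be a type-C partition of size 2n+2a whose largest part r1(d) equals 2a. Then: (i) ∇̌(d) is a type-C partition of size 2n; (ii) the C-collapse of d^t has exactly 2a parts; and (iii) ∇(C-collapse of d^t) equals the D-collapse of (∇̌(d))^t. -/

import Mathlib

/-!
Partitions (Young diagrams) are represented as antitone, eventually-zero
functions `f : ℕ → ℕ`, where `f i` is the length of the `(i+1)`-st row.
-/

/-- `f : ℕ → ℕ` represents a partition (Young diagram). -/
def IsPartition (f : ℕ → ℕ) : Prop :=
  Antitone f ∧ ∃ N, ∀ i, N ≤ i → f i = 0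

/-- The size of a partition: the sum of its parts. -/
noncomputable def size (f : ℕ → ℕ) : ℕ := ∑' i, f i

/-- The sum of the `k` largest parts of a partition. -/
def psum (f : ℕ → ℕ) (k : ℕ) : ℕ := ∑ i ∈ Finset.range k, f i

/-- The multiplicity with which `p` occurs as a part. -/
noncomputable def mult (f : ℕ → ℕ) (p : ℕ) : ℕ := {i | f i = p}.ncard

/-- The transpose (conjugate) partition: `transpose f i` is the length of the
`(i+1)`-st column of `f`. -/
noncomputable def transpose (f : ℕ → ℕ) : ℕ → ℕ := fun i => {j | i < f j}.ncard

/-- The number of parts of a partition (the length of its first column). -/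
noncomputable def numParts (f : ℕ → ℕ) : ℕ := {j | 0 < f j}.ncard

/-- Type B: odd size, and every (positive) even part occurs with even multiplicity. -/
def IsTypeB (f : ℕ → ℕ) : Prop :=
  IsPartition f ∧ Odd (size f) ∧ ∀ p, 0 < p → Even p → Even (mult f p)

/-- Type C: even size, and every odd part occurs with even multiplicity. -/
def IsTypeC (f : ℕ → ℕ) : Prop :=
  IsPartition f ∧ Even (size f) ∧ ∀ p, Odd p → Even (mult f p)

/-- Type D: even size, and every (positive) even part occurs with even multiplicity. -/
def IsTypeD (f : ℕ → ℕ) : Prop :=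
  IsPartition f ∧ Even (size f) ∧ ∀ p, 0 < p → Even p → Even (mult f p)

/-- Dominance order `f ≼ g` between partitions of the same size. -/
def Dom (f g : ℕ → ℕ) : Prop :=
  size f = size g ∧ ∀ k, psum f k ≤ psum g k

/-- `c` is the X-collapse of `d`, where predicate `T` expresses "type X": `c` is
the greatest type-X partition of the same size dominated by `d`. -/
def IsCollapse (T : (ℕ → ℕ) → Prop) (d c : ℕ → ℕ) : Prop :=
  T c ∧ Dom c d ∧ ∀ e, T e → Dom e d → Dom e c

open Classical in
/-- The X-collapse of `d` (junk value if it does not exist). -/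
noncomputable def collapse (T : (ℕ → ℕ) → Prop) (d : ℕ → ℕ) : ℕ → ℕ :=
  if h : ∃ c, IsCollapse T d c then h.choose else fun _ => 0

/-- The B-collapse. -/
noncomputable def collapseB : (ℕ → ℕ) → ℕ → ℕ := collapse IsTypeB

/-- The C-collapse. -/
noncomputable def collapseC : (ℕ → ℕ) → ℕ → ℕ := collapse IsTypeC

/-- The D-collapse. -/
noncomputable def collapseD : (ℕ → ℕ) → ℕ → ℕ := collapse IsTypeD

/-- `d⁺`: add one box to the first row. -/
def boxPlus (f : ℕ → ℕ) : ℕ → ℕ := fun i => if i = 0 then f 0 + 1 else f i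

/-- `d⁻`: remove one box from the last row (for nonempty `d`). -/
noncomputable def boxMinus (f : ℕ → ℕ) : ℕ → ℕ :=
  fun i => if i = numParts f - 1 then f i - 1 else f i

/-- `∇(d)`: remove the first column (every part decreased by 1). -/
def delCol (f : ℕ → ℕ) : ℕ → ℕ := fun i => f i - 1

/-- `∇̌(d)`: remove the first row (delete one largest part). -/
def delRow (f : ℕ → ℕ) : ℕ → ℕ := fun i => f (i + 1)

/-- The metaplectic Lusztig–Spaltenstein map: the D-collapse of the transpose. -/
noncomputable def mLS (d : ℕ → ℕ) : ℕ → ℕ := collapseD (transpose d)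

/-- The map `d̃_SP`: the C-collapse of `(e⁺)⁻`. -/
noncomputable def mSP (e : ℕ → ℕ) : ℕ → ℕ := collapseC (boxMinus (boxPlus e))

/-- The metaplectic Barbasch–Vogan duality. -/
noncomputable def mBV (d : ℕ → ℕ) : ℕ → ℕ := mSP (mLS d)


/-!
Since `d 0 = 2a` is even, deleting the first row keeps `d` of type C, and `dᵗ` is `(∇̌ d)ᵗ` with
a first column of length `2a` added. Transposing a type-C partition gives a partition `g` whose
rows `2m` and `2m + 1` always have the same parity. For such `g` the D-collapse is explicit: in
every pair of rows `2m, 2m + 1` that are even and of different lengths, move one box down.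

Types C and D are read off the partial sums at the drops `f (k + 1) < f k` of a partition:
type C means `psum f (k + 1)` is even there, type D that `psum f (k + 1) + (k + 1)` is. Adding a
column of even length `2a` thus turns type D into type C, and the same parity argument that makes
the explicit partition the D-collapse of `g` makes it, with the column added, the C-collapse of
`dᵗ`. Removing that column again gives (iii), and its length gives (ii).
-/

open Finset

lemma psum_succ (f : ℕ → ℕ) (k : ℕ) : psum f (k + 1) = psum f k + f k :=
  sum_range_succ f k

lemma psum_two_mul_succ (f : ℕ → ℕ) (m : ℕ) :
    psum f (2 * (m + 1)) = psum f (2 * m) + f (2 * m) + f (2 * m + 1) := by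
  rw [show 2 * (m + 1) = 2 * m + 1 + 1 by ring, psum_succ, psum_succ]

lemma eq_of_psum_eq {f g : ℕ → ℕ} (h : ∀ k, psum f k = psum g k) : f = g := by
  funext k
  have := h (k + 1)
  rw [psum_succ, psum_succ, h k] at this
  omega

lemma size_eq_psum {f : ℕ → ℕ} {N : ℕ} (hN : ∀ i, N ≤ i → f i = 0) : size f = psum f N :=
  tsum_eq_sum fun i hi => hN i (by simpa using hi)

lemma psum_eq_size {f : ℕ → ℕ} {N k : ℕ} (hN : ∀ i, N ≤ i → f i = 0) (hk : N ≤ k) :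
    psum f k = size f :=
  (size_eq_psum fun i hi => hN i (hk.trans hi)).symm

lemma collapse_eq_of_isCollapse {T : (ℕ → ℕ) → Prop} {d c : ℕ → ℕ} (hc : IsCollapse T d c) :
    collapse T d = c := by
  have hex : ∃ c, IsCollapse T d c := ⟨c, hc⟩
  rw [collapse, dif_pos hex]
  have h₁ := hc.2.2 _ hex.choose_spec.1 hex.choose_spec.2.1
  have h₂ := hex.choose_spec.2.2 _ hc.1 hc.2.1
  exact eq_of_psum_eq fun k => le_antisymm (h₁.2 k) (h₂.2 k)

/-- If `psum f` caught up with `psum h` at `k + 1`, where `h` drops, then `f` would drop there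
too. -/
lemma psum_lt_of_drop {f h : ℕ → ℕ} {k : ℕ} (hle : ∀ j, psum f j ≤ psum h j)
    (hh : h (k + 1) < h k) (hf : f (k + 1) < f k → psum f (k + 1) ≠ psum h (k + 1)) :
    psum f (k + 1) < psum h (k + 1) := by
  refine lt_of_le_of_ne (hle _) fun heq => hf ?_ heq
  have h₀ := hle k
  have h₂ := hle (k + 1 + 1)
  have := psum_succ f k
  have := psum_succ h k
  have := psum_succ f (k + 1)
  have := psum_succ h (k + 1)
  omega

section Transpose

variable {f : ℕ → ℕ}

lemma lt_transpose_iff (hf : IsPartition f) {i j : ℕ} : i < transpose f j ↔ j < f i := by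
  obtain ⟨hA, N, hN⟩ := hf
  have hfin : {i | j < f i}.Finite :=
    (Set.finite_Iio N).subset fun i hi => by
      by_contra h
      simp only [Set.mem_ofPred_eq, Set.mem_Iio, not_lt] at hi h
      rw [hN i h] at hi
      omega
  constructor
  · intro hi
    by_contra h
    have hsub : {i' | j < f i'} ⊆ (range i : Set ℕ) := fun i' hi' => by
      by_contra h'
      simp only [Set.mem_ofPred_eq, coe_range, Set.mem_Iio, not_lt] at hi' h'
      have := hA h'
      omega
    have := Set.ncard_le_ncard hsub (Set.toFinite _)
    rw [Set.ncard_coe_finset, card_range] at this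
    exact absurd hi (not_lt.2 this)
  · intro h
    have hsub : (range (i + 1) : Set ℕ) ⊆ {i' | j < f i'} := fun i' hi' => by
      simp only [coe_range, Set.mem_Iio] at hi'
      exact lt_of_lt_of_le h (hA (Nat.lt_succ_iff.1 hi'))
    have := Set.ncard_le_ncard hsub hfin
    rw [Set.ncard_coe_finset, card_range] at this
    exact this

lemma transpose_eq_zero (hf : IsPartition f) {j : ℕ} (hj : f 0 ≤ j) : transpose f j = 0 := by
  by_contra h
  have := (lt_transpose_iff hf).1 (Nat.pos_of_ne_zero h)
  omega

lemma isPartition_transpose (hf : IsPartition f) : IsPartition (transpose f) := by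
  refine ⟨fun j j' hjj' => ?_, f 0, fun j hj => transpose_eq_zero hf hj⟩
  by_contra h
  have := (lt_transpose_iff hf).1 (not_le.1 h)
  exact lt_irrefl _ ((lt_transpose_iff hf).2 (lt_of_le_of_lt hjj' this))

lemma transpose_succ_le (hf : IsPartition f) (j : ℕ) : transpose f (j + 1) ≤ transpose f j :=
  (isPartition_transpose hf).1 (Nat.le_succ j)

lemma transpose_apply_of_drop (hf : IsPartition f) {k : ℕ} (hk : f (k + 1) < f k) :
    transpose f (f (k + 1)) = k + 1 := by
  refine eq_of_forall_lt_iff fun i => ?_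
  rw [lt_transpose_iff hf]
  constructor
  · intro hi
    by_contra h
    exact absurd (hf.1 (not_lt.1 h)) (not_le.2 hi)
  · intro hi
    exact lt_of_lt_of_le hk (hf.1 (Nat.lt_succ_iff.1 hi))

lemma drop_at_transpose (hf : IsPartition f) {p k : ℕ} (hk : transpose f p = k + 1) :
    f (k + 1) < f k := by
  have h₁ := (lt_transpose_iff hf (i := k) (j := p)).1 (by omega)
  have h₂ := (lt_transpose_iff hf (i := k + 1) (j := p)).not.1 (by omega)
  omega

/-- The positive values of `transpose f` are exactly the row indices `k + 1` at which `f` drops. -/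
lemma forall_drop_iff_forall_transpose (hf : IsPartition f) {P : ℕ → Prop} (h₀ : P 0) :
    (∀ k, f (k + 1) < f k → P (k + 1)) ↔ ∀ p, P (transpose f p) := by
  constructor
  · intro h p
    rcases hp : transpose f p with _ | k
    · exact h₀
    · exact h k (drop_at_transpose hf hp)
  · intro h k hk
    rw [← transpose_apply_of_drop hf hk]
    exact h _

lemma mult_succ_eq_transpose_sub (hf : IsPartition f) (p : ℕ) :
    mult f (p + 1) = transpose f p - transpose f (p + 1) := by
  have : {i | f i = p + 1} = (Ico (transpose f (p + 1)) (transpose f p) : Set ℕ) := by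
    ext i
    simp only [Set.mem_ofPred_eq, coe_Ico, Set.mem_Ico, ← not_lt, lt_transpose_iff hf]
    omega
  rw [mult, this, Set.ncard_coe_finset, Nat.card_Ico]

end Transpose

section Types

variable {f : ℕ → ℕ}

lemma sum_range_transpose (w : ℕ → ℕ) (hf : IsPartition f) (p : ℕ) :
    ∑ i ∈ range (transpose f p), w (f i) =
      ∑ i ∈ range (transpose f (p + 1)), w (f i) + w (p + 1) * mult f (p + 1) := by
  rw [← sum_range_add_sum_Ico _ (transpose_succ_le hf p), mult_succ_eq_transpose_sub hf]
  congr 1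
  have hrow : ∀ i ∈ Ico (transpose f (p + 1)) (transpose f p), w (f i) = w (p + 1) := by
    intro i hi
    rw [mem_Ico, ← not_lt, lt_transpose_iff hf, lt_transpose_iff hf] at hi
    rw [show f i = p + 1 by omega]
  rw [sum_congr rfl hrow, sum_const, Nat.card_Ico, smul_eq_mul, mul_comm]

lemma even_sum_at_drops_iff (w : ℕ → ℕ) (hf : IsPartition f) :
    (∀ k, f (k + 1) < f k → Even (∑ i ∈ range (k + 1), w (f i))) ↔
      ∀ q, 0 < q → Even (w q * mult f q) := by
  rw [forall_drop_iff_forall_transpose hf (P := fun k => Even (∑ i ∈ range k, w (f i)))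
    (by simp)]
  constructor
  · intro h q hq
    obtain ⟨p, rfl⟩ := Nat.exists_eq_add_of_lt hq
    have := h p
    rw [sum_range_transpose w hf, Nat.even_add] at this
    simpa using this.1 (h (p + 1))
  · intro h p
    induction hp : f 0 - p generalizing p with
    | zero => simp [transpose_eq_zero hf (show f 0 ≤ p by omega)]
    | succ t ih =>
      rw [sum_range_transpose w hf]
      exact (ih (p + 1) (by omega)).add (h (p + 1) p.succ_pos)

lemma isTypeC_iff_even_psum_at_drops :
    IsTypeC f ↔ IsPartition f ∧ Even (size f) ∧ ∀ k, f (k + 1) < f k → Even (psum f (k + 1)) := by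
  refine and_congr_right fun hf => and_congr_right fun _ => ?_
  rw [show (∀ k, f (k + 1) < f k → Even (psum f (k + 1))) ↔
      ∀ k, f (k + 1) < f k → Even (∑ i ∈ range (k + 1), id (f i)) from Iff.rfl,
    even_sum_at_drops_iff id hf]
  refine ⟨fun h q _ => ?_, fun h p hp => ?_⟩
  · rcases Nat.even_or_odd q with hq | hq
    · exact hq.mul_right _
    · exact (h q hq).mul_left _
  · simpa [Nat.even_mul, Nat.not_even_iff_odd.2 hp] using h p hp.pos

lemma isTypeD_iff_even_psum_at_drops :
    IsTypeD f ↔ IsPartition f ∧ Even (size f) ∧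
      ∀ k, f (k + 1) < f k → Even (psum f (k + 1) + (k + 1)) := by
  refine and_congr_right fun hf => and_congr_right fun _ => ?_
  have hsum : ∀ k, ∑ i ∈ range k, (f i + 1) = psum f k + k := fun k => by
    rw [sum_add_distrib, sum_const, card_range, smul_eq_mul, mul_one, psum]
  simp_rw [← hsum]
  rw [even_sum_at_drops_iff (· + 1) hf]
  refine ⟨fun h q hq => ?_, fun h p hp hpe => ?_⟩
  · rcases Nat.even_or_odd q with hq' | hq'
    · exact (h q hq hq').mul_left _
    · exact hq'.add_one.mul_right _
  · simpa [Nat.even_mul, Nat.even_add_one, hpe] using h p hp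

end Types

section RowsAndColumns

variable {f : ℕ → ℕ}

lemma isPartition_delRow (hf : IsPartition f) : IsPartition (delRow f) := by
  obtain ⟨hA, N, hN⟩ := hf
  exact ⟨fun i j hij => hA (Nat.succ_le_succ hij), N, fun i hi => hN (i + 1) (by omega)⟩

lemma size_delRow_add (hf : IsPartition f) : size (delRow f) + f 0 = size f := by
  obtain ⟨N, hN⟩ := hf.2
  rw [size_eq_psum (f := delRow f) (N := N) fun i hi => hN (i + 1) (by omega),
    size_eq_psum (N := N + 1) fun i hi => hN i (by omega), psum, psum, sum_range_succ']
  rfl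

lemma mult_delRow {q : ℕ} (hq : q ≠ f 0) : mult (delRow f) q = mult f q := by
  have : {i | f i = q} = (· + 1) '' {i | delRow f i = q} := by
    ext i
    cases i with
    | zero => simp [hq.symm]
    | succ i => simp [delRow]
  rw [mult, mult, this, Set.ncard_image_of_injective _ (add_left_injective 1)]

lemma isTypeC_delRow (hf : IsTypeC f) (h0 : Even (f 0)) : IsTypeC (delRow f) := by
  obtain ⟨hfp, hsize, hodd⟩ := hf
  refine ⟨isPartition_delRow hfp, ?_, fun p hp => ?_⟩
  · rw [← size_delRow_add hfp] at hsize
    exact (Nat.even_add.1 hsize).2 h0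
  · rw [mult_delRow fun h => Nat.not_even_iff_odd.2 hp (by rwa [h])]
    exact hodd p hp

def addCol (A : ℕ) (f : ℕ → ℕ) : ℕ → ℕ := fun i => if i < A then f i + 1 else 0

lemma transpose_eq_addCol (hf : IsPartition f) :
    transpose f = addCol (f 0) (transpose (delRow f)) := by
  funext j
  unfold addCol
  split_ifs with hj
  · refine eq_of_forall_lt_iff fun i => ?_
    rw [lt_transpose_iff hf]
    cases i with
    | zero => simpa using hj
    | succ i => rw [Nat.succ_lt_succ_iff, lt_transpose_iff (isPartition_delRow hf), delRow]
  · exact transpose_eq_zero hf (not_lt.1 hj)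

variable {A : ℕ}

lemma psum_addCol (hA : ∀ i, A ≤ i → f i = 0) (k : ℕ) :
    psum (addCol A f) k = psum f k + min k A := by
  induction k with
  | zero => simp [psum]
  | succ k ih =>
    rw [psum_succ, psum_succ, ih, addCol]
    split_ifs with hk
    · omega
    · rw [hA k (not_lt.1 hk)]
      omega

lemma isPartition_addCol (hf : Antitone f) : IsPartition (addCol A f) := by
  refine ⟨fun i j hij => ?_, A, fun i hi => if_neg (not_lt.2 hi)⟩
  unfold addCol
  split_ifs <;> first | omega | exact Nat.succ_le_succ (hf hij)

lemma size_addCol (hA : ∀ i, A ≤ i → f i = 0) : size (addCol A f) = size f + A := by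
  rw [size_eq_psum (f := addCol A f) (N := A) fun i hi => if_neg (not_lt.2 hi), psum_addCol hA,
    min_self, ← size_eq_psum hA]

lemma numParts_addCol : numParts (addCol A f) = A := by
  have : {j | 0 < addCol A f j} = (range A : Set ℕ) := by
    ext j
    simp only [addCol, Set.mem_ofPred_eq, coe_range, Set.mem_Iio]
    split_ifs <;> omega
  rw [numParts, this, Set.ncard_coe_finset, card_range]

lemma delCol_addCol (hA : ∀ i, A ≤ i → f i = 0) : delCol (addCol A f) = f := by
  funext i
  simp only [delCol, addCol]
  split_ifs with hi
  · rfl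
  · exact (hA i (not_lt.1 hi)).symm

/-- Adding a column of even length turns type D into type C: below the new column a drop at
`k + 1` raises the partial sum by `k + 1`. -/
lemma isTypeC_addCol {M : ℕ} (hf : IsTypeD f) (hM : ∀ i, 2 * M ≤ i → f i = 0) :
    IsTypeC (addCol (2 * M) f) := by
  obtain ⟨hfp, hsize, hdrop⟩ := isTypeD_iff_even_psum_at_drops.1 hf
  refine isTypeC_iff_even_psum_at_drops.2
    ⟨isPartition_addCol hfp.1, by rw [size_addCol hM]; exact hsize.add (even_two_mul M),
      fun k hk => ?_⟩
  rw [psum_addCol hM]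
  simp only [addCol] at hk
  rcases lt_trichotomy (k + 1) (2 * M) with hlt | heq | hgt
  · rw [if_pos hlt, if_pos (by omega)] at hk
    rw [min_eq_left hlt.le]
    exact hdrop k (by omega)
  · rw [heq, min_self, psum_eq_size hM le_rfl]
    exact hsize.add (even_two_mul M)
  · rw [if_neg (by omega), if_neg (by omega)] at hk
    exact absurd hk (lt_irrefl 0)

end RowsAndColumns

/-- Satisfied exactly by the transposes of type-C partitions. -/
def PairedParity (g : ℕ → ℕ) : Prop := ∀ m, g (2 * m) % 2 = g (2 * m + 1) % 2

lemma pairedParity_transpose {f : ℕ → ℕ} (hf : IsTypeC f) : PairedParity (transpose f) := by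
  intro m
  have hmult := hf.2.2 (2 * m + 1) (odd_two_mul_add_one m)
  rw [mult_succ_eq_transpose_sub hf.1, Nat.even_iff] at hmult
  have := transpose_succ_le hf.1 (2 * m)
  omega

lemma PairedParity.even_psum_two_mul {g : ℕ → ℕ} (hg : PairedParity g) (m : ℕ) :
    Even (psum g (2 * m)) := by
  induction m with
  | zero => simp [psum]
  | succ m ih =>
    rw [psum_two_mul_succ, Nat.even_iff]
    rw [Nat.even_iff] at ih
    have := hg m
    omega

def boxMove (g : ℕ → ℕ) (m : ℕ) : ℕ :=
  if g (2 * m) % 2 = 0 ∧ g (2 * m + 1) < g (2 * m) then 1 else 0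

def pairCollapse (g : ℕ → ℕ) (i : ℕ) : ℕ :=
  if i % 2 = 0 then g i - boxMove g (i / 2) else g i + boxMove g (i / 2)

lemma boxMove_cases (g : ℕ → ℕ) (m : ℕ) :
    (boxMove g m = 1 ∧ g (2 * m) % 2 = 0 ∧ g (2 * m + 1) < g (2 * m)) ∨
      (boxMove g m = 0 ∧ (g (2 * m) % 2 = 0 → g (2 * m) ≤ g (2 * m + 1))) := by
  unfold boxMove
  split_ifs with h
  · exact Or.inl ⟨rfl, h⟩
  · exact Or.inr ⟨rfl, fun h0 => not_lt.1 fun hlt => h ⟨h0, hlt⟩⟩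

lemma pairCollapse_two_mul (g : ℕ → ℕ) (m : ℕ) :
    pairCollapse g (2 * m) = g (2 * m) - boxMove g m := by
  simp [pairCollapse]

lemma pairCollapse_two_mul_add_one (g : ℕ → ℕ) (m : ℕ) :
    pairCollapse g (2 * m + 1) = g (2 * m + 1) + boxMove g m := by
  simp [pairCollapse, Nat.add_mod, show (2 * m + 1) / 2 = m by omega]

lemma psum_pairCollapse_two_mul (g : ℕ → ℕ) (m : ℕ) :
    psum (pairCollapse g) (2 * m) = psum g (2 * m) := by
  induction m with
  | zero => rfl
  | succ m ih =>
    rw [psum_two_mul_succ, psum_two_mul_succ, ih, pairCollapse_two_mul,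
      pairCollapse_two_mul_add_one]
    rcases boxMove_cases g m with ⟨hb, -, hlt⟩ | ⟨hb, -⟩ <;> omega

lemma psum_pairCollapse_two_mul_add_one (g : ℕ → ℕ) (m : ℕ) :
    psum (pairCollapse g) (2 * m + 1) + boxMove g m = psum g (2 * m + 1) := by
  rw [psum_succ, psum_succ, psum_pairCollapse_two_mul, pairCollapse_two_mul]
  rcases boxMove_cases g m with ⟨hb, -, hlt⟩ | ⟨hb, -⟩ <;> omega

lemma psum_pairCollapse_le (g : ℕ → ℕ) (k : ℕ) : psum (pairCollapse g) k ≤ psum g k := by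
  obtain ⟨m, rfl | rfl⟩ := Nat.even_or_odd' k
  · exact (psum_pairCollapse_two_mul g m).le
  · exact Nat.le.intro (psum_pairCollapse_two_mul_add_one g m)

section PairCollapse

variable {g : ℕ → ℕ}

lemma pairCollapse_eq_zero {M : ℕ} (hM : ∀ i, 2 * M ≤ i → g i = 0) {i : ℕ} (hi : 2 * M ≤ i) :
    pairCollapse g i = 0 := by
  obtain ⟨m, rfl | rfl⟩ := Nat.even_or_odd' i
  · rw [pairCollapse_two_mul, hM _ hi, Nat.zero_sub]
  · rw [pairCollapse_two_mul_add_one, hM _ hi]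
    rcases boxMove_cases g m with ⟨-, -, hlt⟩ | ⟨hb, -⟩
    · have := hM (2 * m) (by omega)
      omega
    · omega

lemma PairedParity.antitone_pairCollapse (hpair : PairedParity g) (hg : Antitone g) :
    Antitone (pairCollapse g) := by
  refine antitone_nat_of_succ_le fun i => ?_
  obtain ⟨m, rfl | rfl⟩ := Nat.even_or_odd' i
  · rw [pairCollapse_two_mul, pairCollapse_two_mul_add_one]
    have := hg (show 2 * m ≤ 2 * m + 1 by omega)
    have := hpair m
    rcases boxMove_cases g m with ⟨hb, heven, hlt⟩ | ⟨hb, -⟩ <;> omega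
  · rw [show 2 * m + 1 + 1 = 2 * (m + 1) by ring, pairCollapse_two_mul,
      pairCollapse_two_mul_add_one]
    have := hg (show 2 * m + 1 ≤ 2 * (m + 1) by omega)
    omega

lemma size_pairCollapse (hg : IsPartition g) : size (pairCollapse g) = size g := by
  obtain ⟨N, hN⟩ := hg.2
  have hN' : ∀ i, 2 * N ≤ i → g i = 0 := fun i hi => hN i (by omega)
  rw [size_eq_psum hN', size_eq_psum fun i => pairCollapse_eq_zero hN',
    psum_pairCollapse_two_mul]

lemma PairedParity.isPartition_pairCollapse (hpair : PairedParity g) (hg : IsPartition g) :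
    IsPartition (pairCollapse g) := by
  obtain ⟨N, hN⟩ := hg.2
  exact ⟨hpair.antitone_pairCollapse hg.1, 2 * N,
    fun i hi => pairCollapse_eq_zero (fun i hi => hN i (by omega)) hi⟩

lemma PairedParity.isTypeD_pairCollapse (hpair : PairedParity g) (hg : IsPartition g) :
    IsTypeD (pairCollapse g) := by
  obtain ⟨N, hN⟩ := hg.2
  refine isTypeD_iff_even_psum_at_drops.2 ⟨hpair.isPartition_pairCollapse hg, ?_, fun k hk => ?_⟩
  · rw [size_pairCollapse hg, size_eq_psum (N := 2 * N) fun i hi => hN i (by omega)]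
    exact hpair.even_psum_two_mul N
  obtain ⟨m, hm | hm⟩ := Nat.even_or_odd' (k + 1)
  · rw [hm, psum_pairCollapse_two_mul]
    exact (hpair.even_psum_two_mul m).add (even_two_mul m)
  · obtain rfl : k = 2 * m := by omega
    rw [pairCollapse_two_mul, pairCollapse_two_mul_add_one] at hk
    have hsum := psum_pairCollapse_two_mul_add_one g m
    have hsucc := psum_succ g (2 * m)
    have hev := Nat.even_iff.1 (hpair.even_psum_two_mul m)
    rw [Nat.even_iff]
    rcases boxMove_cases g m with ⟨hb, heven, hlt⟩ | ⟨hb, hle⟩ <;> omega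

/-- `pairCollapse g` has a smaller partial sum than `g` only at `2m + 1` with `boxMove g m = 1`.
There `psum g (2m + 1)` is even, a value that a type-D partition `f ≼ g` can reach neither at a
drop (where `psum f (2m + 1)` is odd) nor away from one (`psum_lt_of_drop`). -/
theorem PairedParity.isCollapse_pairCollapse (hpair : PairedParity g) (hg : IsPartition g) :
    IsCollapse IsTypeD g (pairCollapse g) := by
  refine ⟨hpair.isTypeD_pairCollapse hg, ⟨size_pairCollapse hg, psum_pairCollapse_le g⟩,
    fun f hf hdom => ⟨by rw [hdom.1, size_pairCollapse hg], fun k => ?_⟩⟩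
  obtain ⟨m, rfl | rfl⟩ := Nat.even_or_odd' k
  · rw [psum_pairCollapse_two_mul]
    exact hdom.2 _
  have hsum := psum_pairCollapse_two_mul_add_one g m
  rcases boxMove_cases g m with ⟨hb, heven, hlt⟩ | ⟨hb, -⟩
  · have hdrops := (isTypeD_iff_even_psum_at_drops.1 hf).2.2
    have hsucc := psum_succ g (2 * m)
    have hev := Nat.even_iff.1 (hpair.even_psum_two_mul m)
    have := psum_lt_of_drop hdom.2 hlt fun hfdrop heq => by
      have := Nat.even_iff.1 (hdrops _ hfdrop)
      omega
    omega
  · have := hdom.2 (2 * m + 1)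
    omega

/-- As for `isCollapse_pairCollapse`, with all partial sums shifted by `min k (2 * M)`; now the
critical value `psum g (2m + 1) + (2m + 1)` is odd, and type C forces even sums at drops. -/
theorem PairedParity.isCollapse_addCol_pairCollapse (hpair : PairedParity g) (hg : IsPartition g)
    {M : ℕ} (hM : ∀ i, 2 * M ≤ i → g i = 0) :
    IsCollapse IsTypeC (addCol (2 * M) g) (addCol (2 * M) (pairCollapse g)) := by
  have hcM : ∀ i, 2 * M ≤ i → pairCollapse g i = 0 := fun i => pairCollapse_eq_zero hM
  have hsize : size (addCol (2 * M) (pairCollapse g)) = size (addCol (2 * M) g) := by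
    rw [size_addCol hM, size_addCol hcM, size_pairCollapse hg]
  refine ⟨isTypeC_addCol (hpair.isTypeD_pairCollapse hg) hcM, ⟨hsize, fun k => ?_⟩,
    fun f hf hdom => ⟨by rw [hdom.1, hsize], fun k => ?_⟩⟩
  · rw [psum_addCol hM, psum_addCol hcM]
    exact Nat.add_le_add_right (psum_pairCollapse_le g k) _
  have hle := hdom.2 k
  rw [psum_addCol hM] at hle
  rw [psum_addCol hcM]
  obtain ⟨m, rfl | rfl⟩ := Nat.even_or_odd' k
  · rwa [psum_pairCollapse_two_mul]
  have hsum := psum_pairCollapse_two_mul_add_one g m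
  rcases boxMove_cases g m with ⟨hb, heven, hlt⟩ | ⟨hb, -⟩
  · have hm : 2 * m + 1 < 2 * M := by
      by_contra h
      have := hM (2 * m) (by omega)
      omega
    have hdrop : addCol (2 * M) g (2 * m + 1) < addCol (2 * M) g (2 * m) := by
      simp only [addCol, if_pos hm, if_pos (show 2 * m < 2 * M by omega)]
      omega
    have hdrops := (isTypeC_iff_even_psum_at_drops.1 hf).2.2
    have hsucc := psum_succ g (2 * m)
    have hev := Nat.even_iff.1 (hpair.even_psum_two_mul m)
    have := psum_lt_of_drop hdom.2 hdrop fun hfdrop heq => by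
      have := Nat.even_iff.1 (hdrops _ hfdrop)
      rw [psum_addCol hM] at heq
      omega
    rw [psum_addCol hM] at this
    omega
  · omega

end PairCollapse

theorem stmt_9_general (a n : ℕ) (d : ℕ → ℕ)
    (hd : IsTypeC d) (hsize : size d = 2 * n + 2 * a) (hr1 : d 0 = 2 * a) :
    (IsTypeC (delRow d) ∧ size (delRow d) = 2 * n) ∧
    numParts (collapseC (transpose d)) = 2 * a ∧
    delCol (collapseC (transpose d)) = collapseD (transpose (delRow d)) := by
  have hd' : IsTypeC (delRow d) := isTypeC_delRow hd (hr1 ▸ even_two_mul a)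
  have hsize' : size (delRow d) = 2 * n := by
    have := size_delRow_add hd.1
    omega
  have hg := isPartition_transpose hd'.1
  have hpair := pairedParity_transpose hd'
  have hga : ∀ i, 2 * a ≤ i → transpose (delRow d) i = 0 := fun i hi =>
    transpose_eq_zero hd'.1 ((hd.1.1 (Nat.zero_le 1)).trans (hr1 ▸ hi))
  have hC : collapseC (transpose d) = addCol (2 * a) (pairCollapse (transpose (delRow d))) := by
    rw [transpose_eq_addCol hd.1, hr1]
    exact collapse_eq_of_isCollapse (hpair.isCollapse_addCol_pairCollapse hg hga)
  have hD : collapseD (transpose (delRow d)) = pairCollapse (transpose (delRow d)) :=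
    collapse_eq_of_isCollapse (hpair.isCollapse_pairCollapse hg)
  refine ⟨⟨hd', hsize'⟩, by rw [hC, numParts_addCol], ?_⟩
  rw [hC, hD, delCol_addCol fun i => pairCollapse_eq_zero hga]

/-- for integers `a ≥ n ≥ 0` and a type-C partition `d` of size
`2n+2a` with largest part `2a`: (i) `∇̌(d)` is a type-C partition of size `2n`;
(ii) the C-collapse of `dᵗ` has exactly `2a` parts; (iii) `∇(C-collapse of dᵗ)`
equals the D-collapse of `(∇̌(d))ᵗ`. -/
theorem stmt_9 (a n : ℕ) (han : n ≤ a) (d : ℕ → ℕ)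
    (hd : IsTypeC d) (hsize : size d = 2 * n + 2 * a) (hr1 : d 0 = 2 * a) :
    (IsTypeC (delRow d) ∧ size (delRow d) = 2 * n) ∧
    numParts (collapseC (transpose d)) = 2 * a ∧
    delCol (collapseC (transpose d)) = collapseD (transpose (delRow d)) :=
  stmt_9_general a n d hd hsize hr1
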